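/- Let R be an associative ring and n ≥ 2. Then [K, R, ..., R]_n ⊆ [R, R, ..., R]_{n+1}, where K := [R, R²] + R[R,R]. Moreover K is a two-sided ideal of R, and if R = R² then K equals the two-sided ideal generated by [R,R]. -/

import Mathlib

def lprod {R : Type*} [NonUnitalRing R] : List R → R
  | [] => 0
  | a :: l => l.foldl (· * ·) a

section Aux

variable {R : Type*} [NonUnitalRing R]

lemma lprod_foldl (l : List R) : l ≠ [] → ∀ a : R, List.foldl (· * ·) a l = a * lprod l := by
  induction l with
  | nil => intro h; exact absurd rfl h
  | cons b t ih =>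
    intro _ a
    rw [List.foldl_cons]
    cases t with
    | nil => simp [lprod]
    | cons c s =>
      rw [ih (by simp) (a * b)]
      show _ = a * List.foldl (· * ·) b (c :: s)
      rw [ih (by simp) b, mul_assoc]

lemma lprod_cons {l : List R} (hl : l ≠ []) (a : R) : lprod (a :: l) = a * lprod l :=
  lprod_foldl l hl a

lemma lprod_append {l : List R} (hl : l ≠ []) (s : List R) :
    lprod (l ++ s) = List.foldl (· * ·) (lprod l) s := by
  cases l with
  | nil => exact absurd rfl hl
  | cons b t =>
    show List.foldl (· * ·) b (t ++ s) = _
    rw [List.foldl_append]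
    rfl

end Aux

theorem stmt_16 {R : Type*} [NonUnitalRing R] (n : ℕ) (hn : 2 ≤ n)
    (K : AddSubgroup R)
    (hK : K = AddSubgroup.closure {x : R | ∃ a b c : R, x = a * (b * c) - (b * c) * a} ⊔
          AddSubgroup.closure {x : R | ∃ a b c : R, x = a * (b * c - c * b)}) :
    (AddSubgroup.closure
        {x : R | ∃ k ∈ K, ∃ l : List R, l.length = n - 1 ∧
          x = lprod (k :: l) - lprod (k :: l).reverse} ≤
      AddSubgroup.closure
        {x : R | ∃ l : List R, l.length = n + 1 ∧ x = lprod l - lprod l.reverse}) ∧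
    (∀ x ∈ K, ∀ r : R, x * r ∈ K ∧ r * x ∈ K) ∧
    ((∀ x : R, x ∈ AddSubgroup.closure {y : R | ∃ a b : R, y = a * b}) →
      (K : Set R) = (TwoSidedIdeal.span {x : R | ∃ a b : R, x = a * b - b * a} : Set R)) := by
  have hS1 : ∀ a b c : R, a * (b * c) - (b * c) * a ∈ K := fun a b c => by
    rw [hK]
    exact AddSubgroup.mem_sup_left (AddSubgroup.subset_closure ⟨a, b, c, rfl⟩)
  have hS2 : ∀ a b c : R, a * (b * c - c * b) ∈ K := fun a b c => by
    rw [hK]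
    exact AddSubgroup.mem_sup_right (AddSubgroup.subset_closure ⟨a, b, c, rfl⟩)
  have hKc : K = AddSubgroup.closure ({x : R | ∃ a b c : R, x = a * (b * c) - (b * c) * a} ∪
      {x : R | ∃ a b c : R, x = a * (b * c - c * b)}) := by
    rw [hK, AddSubgroup.closure_union]
  -- Part 2 : K is a two-sided ideal
  have hmul : ∀ x ∈ K, ∀ r : R, x * r ∈ K ∧ r * x ∈ K := by
    intro x hx
    rw [hKc] at hx
    induction hx using AddSubgroup.closure_induction with
    | mem y hy =>
      intro r
      rcases hy with ⟨a, b, c, rfl⟩ | ⟨a, b, c, rfl⟩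
      · constructor
        · have h : (a * (b * c) - (b * c) * a) * r
              = (a * (b * (c * r)) - (b * (c * r)) * a) - (b * c) * (a * r - r * a) := by
            noncomm_ring
          rw [h]; exact sub_mem (hS1 a b (c * r)) (hS2 (b * c) a r)
        · have h : r * (a * (b * c) - (b * c) * a)
              = ((r * a) * (b * c) - (b * c) * (r * a))
                - (r * (b * (c * a)) - (b * (c * a)) * r) + (b * c) * (r * a - a * r) := by
            noncomm_ring
          rw [h]
          exact add_mem (sub_mem (hS1 (r * a) b c) (hS1 r b (c * a))) (hS2 (b * c) r a)
      · constructor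
        · have h : (a * (b * c - c * b)) * r
              = a * (b * (c * r) - (c * r) * b) - (a * c) * (b * r - r * b) := by
            noncomm_ring
          rw [h]; exact sub_mem (hS2 a b (c * r)) (hS2 (a * c) b r)
        · have h : r * (a * (b * c - c * b)) = (r * a) * (b * c - c * b) := by
            noncomm_ring
          rw [h]; exact hS2 (r * a) b c
    | zero =>
      intro r
      simp only [zero_mul, mul_zero]
      exact ⟨zero_mem K, zero_mem K⟩
    | add x y hx hy ihx ihy =>
      intro r
      constructor
      · rw [add_mul]; exact add_mem ((ihx r).1) ((ihy r).1)
      · rw [mul_add]; exact add_mem ((ihx r).2) ((ihy r).2)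
    | neg x hx ihx =>
      intro r
      constructor
      · rw [neg_mul]; exact neg_mem ((ihx r).1)
      · rw [mul_neg]; exact neg_mem ((ihx r).2)
  refine ⟨?_, hmul, ?_⟩
  · -- Part 1
    rw [AddSubgroup.closure_le]
    rintro x ⟨k, hk, l, hlen, rfl⟩
    have hl : l ≠ [] := by
      intro h
      rw [h] at hlen
      simp at hlen
      omega
    have hlr : l.reverse ≠ [] := by simpa using hl
    set T := AddSubgroup.closure
        {x : R | ∃ l : List R, l.length = n + 1 ∧ x = lprod l - lprod l.reverse} with hT
    set w := lprod l with hw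
    set w' := lprod l.reverse with hw'
    have genT : ∀ L : List R, L.length = n + 1 → lprod L - lprod L.reverse ∈ T :=
      fun L h => AddSubgroup.subset_closure ⟨L, h, rfl⟩
    have gen1 : ∀ u v : R, u * (v * w) - w' * v * u ∈ T := by
      intro u v
      have h1 : lprod (u :: v :: l) = u * (v * w) := by
        rw [lprod_cons (by simp) u, lprod_cons hl v]
      have h2 : lprod ((u :: v :: l).reverse) = w' * v * u := by
        have e : (u :: v :: l).reverse = l.reverse ++ [v, u] := by simp
        rw [e, lprod_append hlr]
        simp [List.foldl]
        rfl
      have := genT (u :: v :: l) (by simp [hlen]; omega)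
      rwa [h1, h2] at this
    have gen6 : ∀ u v : R, w' * u * v - v * (u * w) ∈ T := by
      intro u v
      have h1 : lprod (l.reverse ++ [u, v]) = w' * u * v := by
        rw [lprod_append hlr]
        simp [List.foldl]
        rfl
      have h2 : lprod ((l.reverse ++ [u, v]).reverse) = v * (u * w) := by
        have e : (l.reverse ++ [u, v]).reverse = v :: u :: l := by simp
        rw [e, lprod_cons (by simp) v, lprod_cons hl u]
      have := genT (l.reverse ++ [u, v]) (by simp [hlen]; omega)
      rwa [h1, h2] at this
    have hcons : lprod (k :: l) = k * w := lprod_cons hl k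
    have hrev : lprod ((k :: l).reverse) = w' * k := by
      have e : (k :: l).reverse = l.reverse ++ [k] := by simp
      rw [e, lprod_append hlr]
      simp [List.foldl]
      rfl
    rw [SetLike.mem_coe, hcons, hrev]
    clear hcons hrev hlen
    rw [hKc] at hk
    induction hk using AddSubgroup.closure_induction with
    | mem y hy =>
      rcases hy with ⟨a, b, c, rfl⟩ | ⟨a, b, c, rfl⟩
      · have h : (a * (b * c) - (b * c) * a) * w - w' * (a * (b * c) - (b * c) * a)
            = (((a * b) * (c * w) - w' * c * (a * b)) + ((a * b) * (c * w) - w' * c * (a * b)))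
              - (a * ((b * c) * w) - w' * (b * c) * a)
              - (w' * a * (b * c) - (b * c) * (a * w))
              - (b * ((c * a) * w) - w' * (c * a) * b)
              - (b * ((c * a) * w) - w' * (c * a) * b) := by noncomm_ring
        rw [h]
        exact sub_mem (sub_mem (sub_mem (sub_mem
          (add_mem (gen1 (a * b) c) (gen1 (a * b) c)) (gen1 a (b * c)))
          (gen6 a (b * c))) (gen1 b (c * a))) (gen1 b (c * a))
      · have h : (a * (b * c - c * b)) * w - w' * (a * (b * c - c * b))
            = ((a * b) * (c * w) - w' * c * (a * b))
              - (a * ((c * b) * w) - w' * (c * b) * a)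
              + ((b * a) * (c * w) - w' * c * (b * a))
              - (b * ((c * a) * w) - w' * (c * a) * b)
              - (w' * a * (b * c) - (b * c) * (a * w))
              + (w' * (a * c) * b - b * ((a * c) * w)) := by noncomm_ring
        rw [h]
        exact add_mem (sub_mem (sub_mem (add_mem (sub_mem (gen1 (a * b) c) (gen1 a (c * b)))
          (gen1 (b * a) c)) (gen1 b (c * a))) (gen6 a (b * c))) (gen6 (a * c) b)
    | zero =>
      simp only [zero_mul, mul_zero, sub_zero]
      exact zero_mem T
    | add x y hx hy ihx ihy =>
      have h : (x + y) * w - w' * (x + y) = (x * w - w' * x) + (y * w - w' * y) := by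
        noncomm_ring
      rw [h]; exact add_mem ihx ihy
    | neg x hx ihx =>
      have h : (-x) * w - w' * (-x) = -(x * w - w' * x) := by noncomm_ring
      rw [h]; exact neg_mem ihx
  · -- Part 3
    intro hR
    have hcomm : ∀ a b : R, a * b - b * a ∈ K := by
      intro a b
      have hb := hR b
      induction hb using AddSubgroup.closure_induction with
      | mem y hy =>
        obtain ⟨c, d, rfl⟩ := hy
        exact hS1 a c d
      | zero => simpa using zero_mem K
      | add y z hy hz ihy ihz =>
        have h : a * (y + z) - (y + z) * a = (a * y - y * a) + (a * z - z * a) := by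
          noncomm_ring
        rw [h]; exact add_mem ihy ihz
      | neg y hy ihy =>
        have h : a * (-y) - (-y) * a = -(a * y - y * a) := by noncomm_ring
        rw [h]; exact neg_mem ihy
    apply Set.Subset.antisymm
    · -- K ⊆ span
      intro x hx
      rw [SetLike.mem_coe] at hx ⊢
      rw [hKc] at hx
      set I := TwoSidedIdeal.span {x : R | ∃ a b : R, x = a * b - b * a} with hI
      induction hx using AddSubgroup.closure_induction with
      | mem y hy =>
        rcases hy with ⟨a, b, c, rfl⟩ | ⟨a, b, c, rfl⟩
        · have h : a * (b * c) - (b * c) * a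
              = (a * b - b * a) * c + b * (a * c - c * a) := by noncomm_ring
          rw [h]
          exact I.add_mem (I.mul_mem_right _ _ (TwoSidedIdeal.subset_span ⟨a, b, rfl⟩))
            (I.mul_mem_left _ _ (TwoSidedIdeal.subset_span ⟨a, c, rfl⟩))
        · exact I.mul_mem_left _ _ (TwoSidedIdeal.subset_span ⟨b, c, rfl⟩)
      | zero => exact I.zero_mem
      | add y z hy hz ihy ihz => exact I.add_mem ihy ihz
      | neg y hy ihy => exact I.neg_mem ihy
    · -- span ⊆ K
      intro x hx
      rw [SetLike.mem_coe] at hx ⊢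
      have := TwoSidedIdeal.mem_span_iff.mp hx
        (TwoSidedIdeal.mk' (K : Set R) (zero_mem K) (fun ha hb => add_mem ha hb)
          (fun ha => neg_mem ha) (fun {r y} hy => (hmul y hy r).2) (fun {y r} hy => (hmul y hy r).1))
        (by
          rintro y ⟨a, b, rfl⟩
          rw [SetLike.mem_coe, TwoSidedIdeal.mem_mk']
          exact hcomm a b)
      rwa [TwoSidedIdeal.mem_mk'] at this
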